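/- If P ∈ ℚ[x_0,…,x_N] satisfies D_{K2}(P) = 0, then for every fixed x ∈ ℝ the value P(K_0(x,a), K_1(x,a), …, K_N(x,a)) is independent of a; that is, for all x, a, a′ ∈ ℝ one has P(K(x,a)) = P(K(x,a′)). -/

import Mathlib

/-!
`K_n(x,a)` is the coefficient of `z^n` in `(1-z)^x (1+z)^(a-x)`, so by Chu–Vandermonde
(`(1+z)^(s+t) = (1+z)^s (1+z)^t` for real exponents) shifting `a` by `h` multiplies the
generating function by `(1+z)^h`. Differentiating at `h = 0`, `∂/∂a` acts as
multiplication by `log(1+z) = ∑ (-1)^(j+1) z^j / j`, which is exactly how `D_{K2}` acts on the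
variables; by the chain rule `∂/∂a P(K(x,a)) = (D_{K2} P)(K(x,a)) = 0`.
-/

/-- Generalized binomial coefficient `C(t, k) = t(t-1)⋯(t-k+1)/k!` of a real number. -/
noncomputable def genBinom (t : ℝ) (k : ℕ) : ℝ :=
  (∏ j ∈ Finset.range k, (t - j)) / (Nat.factorial k)

/-- The binary Kravchuk polynomial `K_n(x,a) = ∑_{i=0}^n (-1)^i C(x,i) C(a-x, n-i)`. -/
noncomputable def K (n : ℕ) (x a : ℝ) : ℝ :=
  ∑ i ∈ Finset.range (n + 1), (-1 : ℝ) ^ i * genBinom x i * genBinom (a - x) (n - i)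

/-- The variable `x_i` of `ℚ[x_0,…,x_N]` (for `i ≤ N`). -/
noncomputable def Xv (N : ℕ) (i : ℕ) : MvPolynomial (Fin (N + 1)) ℚ :=
  if h : i ≤ N then MvPolynomial.X ⟨i, Nat.lt_succ_of_le h⟩ else 0

/-- The second Kravchuk derivation: `D_{K2}(x_0)=0`,
`D_{K2}(x_m)=∑_{i=0}^{m-1} ((-1)^{m+1+i}/(m-i)) x_i`. -/
noncomputable def DK2 (N : ℕ) :
    Derivation ℚ (MvPolynomial (Fin (N + 1)) ℚ) (MvPolynomial (Fin (N + 1)) ℚ) :=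
  MvPolynomial.mkDerivation ℚ fun m : Fin (N + 1) =>
    ∑ i ∈ Finset.range (m : ℕ),
      MvPolynomial.C ((-1 : ℚ) ^ ((m : ℕ) + 1 + i) / (((m : ℕ) : ℚ) - (i : ℚ))) * Xv N i

open Finset PowerSeries

theorem genBinom_eq_choose (t : ℝ) (k : ℕ) : genBinom t k = Ring.choose t k := by
  rw [Ring.choose_eq_smul, genBinom, div_eq_inv_mul, smul_eq_mul,
    ← Polynomial.eval₂_smulOneHom_eq_smeval, ← descPochhammer_eval_eq_prod_range,
    ← descPochhammer_map (Int.castRingHom ℝ), Polynomial.eval_map]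
  congr 2
  exact Subsingleton.elim _ _

theorem genBinom_add (s t : ℝ) (n : ℕ) :
    genBinom (s + t) n = ∑ ij ∈ antidiagonal n, genBinom s ij.1 * genBinom t ij.2 := by
  simp only [genBinom_eq_choose]
  exact Ring.add_choose_eq n (Commute.all s t)

noncomputable def binomSeries (t : ℝ) : ℝ⟦X⟧ := mk (genBinom t)

theorem binomSeries_add (s t : ℝ) : binomSeries (s + t) = binomSeries s * binomSeries t := by
  ext n
  simp [binomSeries, coeff_mul, genBinom_add]

noncomputable def kravchukSeries (x a : ℝ) : ℝ⟦X⟧ := mk fun n => K n x a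

theorem kravchukSeries_eq_rescale_mul (x a : ℝ) :
    kravchukSeries x a = rescale (-1) (binomSeries x) * binomSeries (a - x) := by
  ext n
  rw [kravchukSeries, coeff_mk, K, coeff_mul, Nat.sum_antidiagonal_eq_sum_range_succ
    (fun i j => coeff i (rescale (-1) (binomSeries x)) * coeff j (binomSeries (a - x)))]
  simp [binomSeries, coeff_rescale]

theorem kravchukSeries_add_right (x a h : ℝ) :
    kravchukSeries x (a + h) = kravchukSeries x a * binomSeries h := by
  rw [kravchukSeries_eq_rescale_mul, kravchukSeries_eq_rescale_mul, add_sub_right_comm,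
    binomSeries_add, mul_assoc]

theorem K_add_right (n : ℕ) (x a h : ℝ) :
    K n x (a + h) = ∑ ij ∈ antidiagonal n, K ij.1 x a * genBinom h ij.2 := by
  simpa [kravchukSeries, binomSeries, coeff_mul] using
    congrArg (coeff n) (kravchukSeries_add_right x a h)

/-- The coefficients of `log (1 + z)`; division by zero makes the constant term `0`. -/
noncomputable def logOneAddCoeff (j : ℕ) : ℝ := (-1) ^ (j + 1) / j

theorem hasDerivAt_genBinom_zero (j : ℕ) :
    HasDerivAt (fun h => genBinom h j) (logOneAddCoeff j) 0 := by
  cases j with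
  | zero => simpa [genBinom, logOneAddCoeff] using hasDerivAt_const (0 : ℝ) (1 : ℝ)
  | succ j =>
    set g : ℝ → ℝ := fun h => ∏ l ∈ range j, (h - (l + 1))
    have hg : HasDerivAt (fun h => g h * h / (j + 1).factorial) (g 0 / (j + 1).factorial) 0 := by
      simpa using ((DifferentiableAt.hasDerivAt (f := g) (by fun_prop)).fun_mul
        (hasDerivAt_id' 0)).div_const ((j + 1).factorial : ℝ)
    have hg0 : g 0 = (-1) ^ j * j.factorial := calc
      g 0 = ∏ l ∈ range j, (-1) * ((l : ℝ) + 1) := prod_congr rfl fun l _ => by ring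
      _ = (-1) ^ j * ∏ l ∈ range j, ((l : ℝ) + 1) := by
        rw [prod_mul_distrib, prod_const, card_range]
      _ = (-1) ^ j * j.factorial := by rw [← prod_range_add_one_eq_factorial j]; push_cast; rfl
    convert hg using 1
    · ext h
      simp [genBinom, g, prod_range_succ']
    · rw [logOneAddCoeff, hg0, Nat.factorial_succ]
      push_cast
      field_simp
      ring

theorem hasDerivAt_K (n : ℕ) (x a : ℝ) :
    HasDerivAt (fun a => K n x a) (∑ ij ∈ antidiagonal n, K ij.1 x a * logOneAddCoeff ij.2) a := by
  have hshift : HasDerivAt (fun h => K n x (a + h))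
      (∑ ij ∈ antidiagonal n, K ij.1 x a * logOneAddCoeff ij.2) (a - a) := by
    simp_rw [K_add_right, sub_self]
    exact HasDerivAt.fun_sum fun ij _ => (hasDerivAt_genBinom_zero ij.2).const_mul _
  simpa using hshift.comp_sub_const a a

open MvPolynomial in
theorem hasDerivAt_aeval_of_derivation {σ R 𝕜 : Type*} [CommSemiring R]
    [NontriviallyNormedField 𝕜] [Algebra R 𝕜]
    (D : Derivation R (MvPolynomial σ R) (MvPolynomial σ R)) {f : σ → 𝕜 → 𝕜} {t : 𝕜}
    (hf : ∀ i, HasDerivAt (f i) (aeval (f · t) (D (X i))) t) (P : MvPolynomial σ R) :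
    HasDerivAt (fun s => aeval (f · s) P) (aeval (f · t) (D P)) t := by
  induction P using MvPolynomial.induction_on with
  | C r =>
    rw [← algebraMap_eq, D.map_algebraMap, map_zero]
    simpa using hasDerivAt_const t (algebraMap R 𝕜 r)
  | add p q hp hq => simpa using hp.fun_add hq
  | mul_X p i hp =>
    simp only [map_mul, aeval_X, D.leibniz, map_add, smul_eq_mul]
    exact (hp.fun_mul (hf i)).congr_deriv (by ring)

open MvPolynomial in
theorem aeval_DK2_X (N : ℕ) (v : ℕ → ℝ) (m : Fin (N + 1)) :
    aeval (fun i : Fin (N + 1) => v i) (DK2 N (X m))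
      = ∑ ij ∈ antidiagonal (m : ℕ), v ij.1 * logOneAddCoeff ij.2 := by
  rw [DK2, mkDerivation_X, map_sum, Nat.sum_antidiagonal_eq_sum_range_succ
    (fun i j => v i * logOneAddCoeff j), sum_range_succ, Nat.sub_self]
  simp only [logOneAddCoeff, Nat.cast_zero, div_zero, mul_zero, add_zero]
  refine sum_congr rfl fun i hi => ?_
  have him : i < m := mem_range.mp hi
  rw [map_mul, Xv, dif_pos (by omega), aeval_X, aeval_C, eq_ratCast, Nat.cast_sub him.le,
    show (m : ℕ) + 1 + i = (m - i + 1) + 2 * i by omega, pow_add, pow_mul]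
  push_cast
  ring

/-- If `D_{K2}(P) = 0` then `P(K(x,a))` does not depend on `a`. -/
theorem aeval_kravchuk_const_of_DK2_eq_zero (N : ℕ) (P : MvPolynomial (Fin (N + 1)) ℚ)
    (hP : DK2 N P = 0) (x a a' : ℝ) :
    MvPolynomial.aeval (fun i : Fin (N + 1) => K (i : ℕ) x a) P
      = MvPolynomial.aeval (fun i : Fin (N + 1) => K (i : ℕ) x a') P := by
  have hderiv (b : ℝ) :
      HasDerivAt (fun a => MvPolynomial.aeval (fun i : Fin (N + 1) => K (i : ℕ) x a) P) 0 b := by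
    have h := hasDerivAt_aeval_of_derivation (DK2 N)
      (fun m => by rw [aeval_DK2_X N (K · x b)]; exact hasDerivAt_K m x b) P
    rwa [hP, map_zero] at h
  exact is_const_of_deriv_eq_zero (fun b => (hderiv b).differentiableAt)
    (fun b => (hderiv b).deriv) a a'
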